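/- Assume every nodal concentration value is strictly positive (c⁺_{j−1/2} > 0 and c⁻_{j+1/2} > 0 for every cell j), z₁ ≥ 0, and that for every cell j = 1,…,N and every Gauss index i ∈ {1,2}: 6Δt·z₁·max{P_j^i, 0} ≤ 1; if q_j^i ≥ 0 then c̃_j^i ≥ 0; and if q_j^i < 0 then c̃_j^i = c(x_j^i) and 6Δt(−q_j^i) < min{Φ_{j−1/2}, Φ_{j+1/2}}. Then the source part H_j^s := r̄_j/3 + (Δt/2)·∑_{i=1,2}(c̃_j^i·q_j^i − z₁·r(x_j^i)·P_j^i) satisfies H_j^s > 0 for every cell j = 1,…,N. -/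

import Mathlib

/-!
Gauss quadrature is exact for the linear function `r` on a cell, so `r̄_j / 3` splits as
`r(x_j^1) / 6 + r(x_j^2) / 6`, and it suffices to show that each Gauss point contributes
positively. There the pressure term costs at most `r / 12` by the bound on `Δt z₁ P`, and an
outflow `q < 0` costs less than `min Φ · c / 12 ≤ r / 12` by the bound on `Δt q`, while an
inflow only adds a nonnegative amount.
-/

noncomputable section

namespace DG1D

/-- Gauss constant `μ₁ = (3+√3)/6`. -/
def mu1 : ℝ := (3 + Real.sqrt 3) / 6

/-- Gauss constant `μ₂ = (3-√3)/6`. -/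
def mu2 : ℝ := (3 - Real.sqrt 3) / 6

/-- Cell average `r̄_j = (r⁺_{j-1/2} + r⁻_{j+1/2})/2`.  Here `Φ j` denotes the nodal
porosity value `Φ_{j+1/2}` (so `Φ (j-1)` is `Φ_{j-1/2}`), `cP j` denotes the left-node
concentration trace `c⁺_{j-1/2}` of cell `j`, and `cM j` denotes the right-node trace
`c⁻_{j+1/2}` of cell `j`. -/
def rbar (Φ cP cM : ℕ → ℝ) (j : ℕ) : ℝ :=
  (cP j * Φ (j - 1) + cM j * Φ j) / 2

/-- Convective flux `ûc_{j+1/2} = u⁺_{j+1/2}·c⁺_{j+1/2} - α·[c]_{j+1/2}` at the interior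
node `j+1/2` (`u j` denotes `u⁺_{j+1/2}`; `c⁺_{j+1/2} = cP (j+1)`, `c⁻_{j+1/2} = cM j`). -/
def uc (u cP cM : ℕ → ℝ) (α : ℝ) (j : ℕ) : ℝ :=
  u j * cP (j + 1) - α * (cP (j + 1) - cM j)

/-- Diffusive flux `F̂_{j+1/2} = (D⁻·(c_x)⁻ + D⁺·(c_x)⁺)/2 + (α̃/Δx)·[c]_{j+1/2}` at the
interior node `j+1/2`, with `(c_x)⁻_{j+1/2} = (c⁻_{j+1/2} - c⁺_{j-1/2})/Δx` and
`(c_x)⁺_{j+1/2} = (c⁻_{j+3/2} - c⁺_{j+1/2})/Δx`. -/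
def Fhat (Dm Dp cP cM : ℕ → ℝ) (αt Δx : ℝ) (j : ℕ) : ℝ :=
  (Dm j * ((cM j - cP j) / Δx) + Dp j * ((cM (j + 1) - cP (j + 1)) / Δx)) / 2
    + (αt / Δx) * (cP (j + 1) - cM j)

/-- Value of the linear function `r` at Gauss point `i` of cell `j`:
`r(x_j^1) = μ₁·r⁺_{j-1/2} + μ₂·r⁻_{j+1/2}`, `r(x_j^2) = μ₂·r⁺_{j-1/2} + μ₁·r⁻_{j+1/2}`. -/
def rG (Φ cP cM : ℕ → ℝ) (j : ℕ) (i : Fin 2) : ℝ :=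
  if i = 0 then mu1 * (cP j * Φ (j - 1)) + mu2 * (cM j * Φ j)
  else mu2 * (cP j * Φ (j - 1)) + mu1 * (cM j * Φ j)

/-- Value of the linear function `c` at Gauss point `i` of cell `j`. -/
def cG (cP cM : ℕ → ℝ) (j : ℕ) (i : Fin 2) : ℝ :=
  if i = 0 then mu1 * cP j + mu2 * cM j else mu2 * cP j + mu1 * cM j

/-- Value of the linear interpolant of `Φ` at Gauss point `i` of cell `j`. -/
def phiG (Φ : ℕ → ℝ) (j : ℕ) (i : Fin 2) : ℝ :=
  if i = 0 then mu1 * Φ (j - 1) + mu2 * Φ j else mu2 * Φ (j - 1) + mu1 * Φ j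

/-- Convective flux with the boundary conventions `ûc_{1/2} = ûc_{N+1/2} = 0`. -/
def ucB (N : ℕ) (u cP cM : ℕ → ℝ) (α : ℝ) (j : ℕ) : ℝ :=
  if 1 ≤ j ∧ j ≤ N - 1 then uc u cP cM α j else 0

/-- Diffusive flux with the boundary conventions `F̂_{1/2} = F̂_{N+1/2} = 0`. -/
def FhatB (N : ℕ) (Dm Dp cP cM : ℕ → ℝ) (αt Δx : ℝ) (j : ℕ) : ℝ :=
  if 1 ≤ j ∧ j ≤ N - 1 then Fhat Dm Dp cP cM αt Δx j else 0

/-- Velocity flux `û_{j+1/2}` with boundary conventions `û_{1/2} = û_{N+1/2} = 0`. -/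
def uhatB (N : ℕ) (u : ℕ → ℝ) (j : ℕ) : ℝ :=
  if 1 ≤ j ∧ j ≤ N - 1 then u j else 0

/-- The Euler-forward cell-average update
`r̄_j^{new} = r̄_j + λ(ûc_{j-1/2} - ûc_{j+1/2}) - λ(F̂_{j-1/2} - F̂_{j+1/2})
  + (Δt/2)·∑_{i=1,2}(c̃_j^i·q_j^i - z₁·r(x_j^i)·P_j^i)`. -/
def rbarnew (N : ℕ) (Φ cP cM u Dm Dp : ℕ → ℝ) (q ct P : ℕ → Fin 2 → ℝ)
    (α αt z1 Δx Δt : ℝ) (j : ℕ) : ℝ :=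
  rbar Φ cP cM j
    + (Δt / Δx) * (ucB N u cP cM α (j - 1) - ucB N u cP cM α j)
    - (Δt / Δx) * (FhatB N Dm Dp cP cM αt Δx (j - 1) - FhatB N Dm Dp cP cM αt Δx j)
    + (Δt / 2) * ∑ i : Fin 2, (ct j i * q j i - z1 * rG Φ cP cM j i * P j i)

theorem min_mul_add_le_add_mul {a b x y u v : ℝ} (ha : 0 ≤ a) (hb : 0 ≤ b) (hx : 0 ≤ x)
    (hy : 0 ≤ y) : min u v * (a * x + b * y) ≤ a * (x * u) + b * (y * v) :=
  calc min u v * (a * x + b * y) = a * (x * min u v) + b * (y * min u v) := by ring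
    _ ≤ a * (x * u) + b * (y * v) := by gcongr <;> simp

theorem gauss_point_source_pos {r c m Δt z1 p q ct : ℝ} (hΔt : 0 ≤ Δt) (hz1 : 0 ≤ z1)
    (hc : 0 < c) (hm : 0 < m) (hr : m * c ≤ r) (hp : 6 * Δt * z1 * max p 0 ≤ 1)
    (hinflow : 0 ≤ q → 0 ≤ ct) (houtflow : q < 0 → ct = c ∧ 6 * Δt * (-q) < m) :
    0 < r / 6 + Δt / 2 * (ct * q - z1 * r * p) := by
  have hr0 : 0 < r := (mul_pos hm hc).trans_le hr
  have hpressure : Δt * z1 * p * r ≤ r / 6 := by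
    have hmax : Δt * z1 * p * r ≤ Δt * z1 * max p 0 * r := by gcongr; exact le_max_left p 0
    linarith [mul_le_mul_of_nonneg_right hp hr0.le]
  have hsource : -(r / 6) < Δt * (ct * q) := by
    rcases lt_or_ge q 0 with hq | hq
    · obtain ⟨rfl, hcfl⟩ := houtflow hq
      nlinarith [mul_lt_mul_of_pos_right hcfl hc]
    · have := mul_nonneg hΔt (mul_nonneg (hinflow hq) hq)
      linarith
  linarith

theorem mu1_pos : 0 < mu1 := by unfold mu1; positivity

theorem mu2_pos : 0 < mu2 := by
  have : Real.sqrt 3 < 3 := by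
    rw [Real.sqrt_lt' (by norm_num)]
    norm_num
  unfold mu2
  linarith

theorem mu1_add_mu2 : mu1 + mu2 = 1 := by unfold mu1 mu2; ring

section Cell

variable {Φ cP cM : ℕ → ℝ} {j : ℕ}

theorem cG_pos (hP : 0 < cP j) (hM : 0 < cM j) (i : Fin 2) : 0 < cG cP cM j i := by
  have := mu1_pos
  have := mu2_pos
  fin_cases i <;> simp only [cG] <;> positivity

theorem min_mul_cG_le_rG (hP : 0 ≤ cP j) (hM : 0 ≤ cM j) (i : Fin 2) :
    min (Φ (j - 1)) (Φ j) * cG cP cM j i ≤ rG Φ cP cM j i := by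
  have := mu1_pos.le
  have := mu2_pos.le
  fin_cases i <;> simp only [cG, rG] <;>
    exact min_mul_add_le_add_mul (by assumption) (by assumption) hP hM

theorem rbar_div_three : rbar Φ cP cM j / 3 = ∑ i : Fin 2, rG Φ cP cM j i / 6 := by
  simp only [Fin.sum_univ_two, rG, rbar, Fin.isValue, ↓reduceIte, one_ne_zero]
  linear_combination (cP j * Φ (j - 1) + cM j * Φ j) / 6 * mu1_add_mu2.symm

end Cell

theorem source_part_positive_1d_general
    (N : ℕ) (Δt : ℝ) (hΔt : 0 < Δt)
    (Φ cP cM : ℕ → ℝ) (q ct P : ℕ → Fin 2 → ℝ) (z1 : ℝ)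
    (hΦ : ∀ j, j ≤ N → 0 < Φ j)
    -- every nodal concentration value strictly positive
    (hc : ∀ j, 1 ≤ j → j ≤ N → 0 < cP j ∧ 0 < cM j)
    (hz1 : 0 ≤ z1)
    (hP : ∀ j, 1 ≤ j → j ≤ N → ∀ i : Fin 2, 6 * Δt * z1 * max (P j i) 0 ≤ 1)
    (hq1 : ∀ j, 1 ≤ j → j ≤ N → ∀ i : Fin 2, 0 ≤ q j i → 0 ≤ ct j i)
    (hq2 : ∀ j, 1 ≤ j → j ≤ N → ∀ i : Fin 2, q j i < 0 →
      ct j i = cG cP cM j i ∧ 6 * Δt * (-q j i) < min (Φ (j - 1)) (Φ j)) :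
    ∀ j, 1 ≤ j → j ≤ N →
      0 < rbar Φ cP cM j / 3
            + (Δt / 2) * ∑ i : Fin 2, (ct j i * q j i - z1 * rG Φ cP cM j i * P j i) := by
  intro j hj1 hjN
  obtain ⟨hcP, hcM⟩ := hc j hj1 hjN
  have hm : 0 < min (Φ (j - 1)) (Φ j) := lt_min (hΦ _ (by omega)) (hΦ _ hjN)
  rw [rbar_div_three, Finset.mul_sum, ← Finset.sum_add_distrib]
  refine Finset.sum_pos (fun i _ => ?_) Finset.univ_nonempty
  exact gauss_point_source_pos hΔt.le hz1 (cG_pos hcP hcM i) hm (min_mul_cG_le_rG hcP.le hcM.le i)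
    (hP j hj1 hjN i) (hq1 j hj1 hjN i) (hq2 j hj1 hjN i)

/-- Lemma 3.3 (1D): positivity of the source part
`H_j^s = r̄_j/3 + (Δt/2)·∑_{i=1,2}(c̃_j^i·q_j^i - z₁·r(x_j^i)·P_j^i)` for every cell. -/
theorem source_part_positive_1d
    (N : ℕ) (hN : 4 ≤ N) (Δx Δt : ℝ) (hΔx : 0 < Δx) (hΔt : 0 < Δt)
    (Φ cP cM : ℕ → ℝ) (q ct P : ℕ → Fin 2 → ℝ) (z1 : ℝ)
    (hΦ : ∀ j, j ≤ N → 0 < Φ j)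
    -- every nodal concentration value strictly positive
    (hc : ∀ j, 1 ≤ j → j ≤ N → 0 < cP j ∧ 0 < cM j)
    (hz1 : 0 ≤ z1)
    (hP : ∀ j, 1 ≤ j → j ≤ N → ∀ i : Fin 2, 6 * Δt * z1 * max (P j i) 0 ≤ 1)
    (hq1 : ∀ j, 1 ≤ j → j ≤ N → ∀ i : Fin 2, 0 ≤ q j i → 0 ≤ ct j i)
    (hq2 : ∀ j, 1 ≤ j → j ≤ N → ∀ i : Fin 2, q j i < 0 →
      ct j i = cG cP cM j i ∧ 6 * Δt * (-q j i) < min (Φ (j - 1)) (Φ j)) :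
    ∀ j, 1 ≤ j → j ≤ N →
      0 < rbar Φ cP cM j / 3
            + (Δt / 2) * ∑ i : Fin 2, (ct j i * q j i - z1 * rG Φ cP cM j i * P j i) :=
  source_part_positive_1d_general N Δt hΔt Φ cP cM q ct P z1 hΦ hc hz1 hP hq1 hq2

end DG1D
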